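/- arXiv:1507.05228 — 2 statements merged into one kernel-verified Lean document; each statement's English description precedes it below -/
import Mathlib

section
/- Let A be an N×N left-stochastic matrix with nonnegative entries (each column sums to 1), E an N×N matrix, M and R block-diagonal matrices (step-sizes and covariances), and define B = ((A⊗I_M) + (E⊗I_M))^T (I − M R). Then the spectral radius of B satisfies ρ(B) ≤ (1 + ‖(E⊗I_M)^T‖_{b,∞}) · ‖I − M R‖_{b,∞}, where ‖·‖_{b,∞} denotes the block maximum norm with blocks of size M. -/
/-!
Identifying a vector with its family of blocks `o → EuclideanSpace ℂ m` (sup norm of the block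
Euclidean norms) turns a matrix into a continuous linear operator, and `bmatNorm` into the
operator norm. Along this algebra isomorphism the block maximum norm becomes sub-additive and
sub-multiplicative and bounds the spectral radius. The consensus part `(A ⊗ I)ᵀ` replaces each
block by a convex combination of blocks, so its norm is at most `1`, and the bound follows from
`ρ(B) ≤ ‖B‖ ≤ (‖(A ⊗ I)ᵀ‖ + ‖(E ⊗ I)ᵀ‖) ‖I - M R‖`.
-/

open Matrix Kronecker

/-- Block maximum norm of a block vector with blocks indexed by `o`, each block a
vector indexed by `m`: the maximum of the Euclidean norms of the blocks. -/
noncomputable def bvecNorm {o m : Type*} [Fintype o] [Fintype m]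
    (x : o × m → ℂ) : ℝ :=
  ⨆ k : o, Real.sqrt (∑ j : m, ‖x (k, j)‖ ^ 2)

/-- Block maximum norm of a matrix: the norm induced by the block maximum vector norm. -/
noncomputable def bmatNorm {o m : Type*} [Fintype o] [Fintype m]
    (Y : Matrix (o × m) (o × m) ℂ) : ℝ :=
  sSup {c : ℝ | ∃ x : o × m → ℂ, bvecNorm x ≤ 1 ∧ c = bvecNorm (Y.mulVec x)}

-- Unlike `spectrum.spectralRadius_le_nnnorm`, no `NormOneClass`: `‖1‖ ≤ 1` also on the zero space.
lemma ContinuousLinearMap.spectralRadius_le_norm {E : Type*} [NormedAddCommGroup E]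
    [NormedSpace ℂ E] [CompleteSpace E] (f : E →L[ℂ] E) :
    spectralRadius ℂ f ≤ ENNReal.ofReal ‖f‖ := by
  refine iSup₂_le fun z hz => ?_
  rw [← ENNReal.ofReal_coe_nnreal, coe_nnnorm]
  refine ENNReal.ofReal_le_ofReal ((spectrum.norm_le_norm_mul_of_mem hz).trans ?_)
  exact mul_le_of_le_one_right (norm_nonneg f) ContinuousLinearMap.norm_id_le

variable {o m : Type*} [Fintype o] [Fintype m]

def blockEquiv : (o × m → ℂ) ≃ₗ[ℂ] (o → EuclideanSpace ℂ m) :=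
  (LinearEquiv.curry ℂ ℂ o m).trans
    (LinearEquiv.piCongrRight fun _ => (WithLp.linearEquiv 2 ℂ (m → ℂ)).symm)

omit [Fintype o] [Fintype m] in
@[simp]
lemma blockEquiv_apply (x : o × m → ℂ) (k : o) (j : m) : blockEquiv x k j = x (k, j) := rfl

lemma bvecNorm_eq_norm_blockEquiv (x : o × m → ℂ) : bvecNorm x = ‖blockEquiv x‖ := by
  have hblock : ∀ k, Real.sqrt (∑ j : m, ‖x (k, j)‖ ^ 2) = ‖blockEquiv x k‖ := fun k => by
    simp [EuclideanSpace.norm_eq]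
  simp only [bvecNorm, hblock]
  refine le_antisymm (Real.iSup_le (norm_le_pi_norm _) (norm_nonneg _)) ?_
  exact (pi_norm_le_iff_of_nonneg (Real.iSup_nonneg fun _ => norm_nonneg _)).2
    fun k => le_ciSup (f := fun k => ‖blockEquiv x k‖) (Set.finite_range _).bddAbove k

lemma blockEquiv_kronecker_one_mulVec [DecidableEq m] (C : Matrix o o ℂ) (x : o × m → ℂ)
    (k : o) : blockEquiv ((C ⊗ₖ (1 : Matrix m m ℂ)) *ᵥ x) k = ∑ l, C k l • blockEquiv x l := by
  ext j
  simp [mulVec, dotProduct, Fintype.sum_prod_type, kroneckerMap_apply, one_apply]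

variable [DecidableEq o] [DecidableEq m]

noncomputable def blockOp :
    Matrix (o × m) (o × m) ℂ ≃ₐ[ℂ] ((o → EuclideanSpace ℂ m) →L[ℂ] (o → EuclideanSpace ℂ m)) :=
  Matrix.toLinAlgEquiv'.trans
    ((blockEquiv.conjAlgEquiv ℂ).trans (Module.End.toContinuousLinearMap _))

lemma blockOp_blockEquiv (Y : Matrix (o × m) (o × m) ℂ) (x : o × m → ℂ) :
    blockOp Y (blockEquiv x) = blockEquiv (Y *ᵥ x) := by
  ext k j
  simp [blockOp, LinearEquiv.conjAlgEquiv_apply, Module.End.toContinuousLinearMap]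

lemma bmatNorm_eq_norm_blockOp (Y : Matrix (o × m) (o × m) ℂ) : bmatNorm Y = ‖blockOp Y‖ := by
  rw [← (blockOp Y).sSup_unitClosedBall_eq_norm, bmatNorm]
  congr 1
  ext c
  simp only [Set.mem_ofPred_eq, Set.mem_image, mem_closedBall_zero_iff]
  constructor
  · rintro ⟨x, hx, rfl⟩
    exact ⟨blockEquiv x, by rwa [← bvecNorm_eq_norm_blockEquiv],
      by rw [blockOp_blockEquiv, bvecNorm_eq_norm_blockEquiv]⟩
  · rintro ⟨v, hv, rfl⟩
    obtain ⟨x, rfl⟩ := blockEquiv.surjective v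
    exact ⟨x, by rwa [bvecNorm_eq_norm_blockEquiv],
      by rw [blockOp_blockEquiv, bvecNorm_eq_norm_blockEquiv]⟩

lemma bmatNorm_nonneg (Y : Matrix (o × m) (o × m) ℂ) : 0 ≤ bmatNorm Y :=
  bmatNorm_eq_norm_blockOp Y ▸ norm_nonneg _

lemma bmatNorm_add_le (X Y : Matrix (o × m) (o × m) ℂ) :
    bmatNorm (X + Y) ≤ bmatNorm X + bmatNorm Y := by
  simpa only [bmatNorm_eq_norm_blockOp, map_add] using norm_add_le _ _

lemma bmatNorm_mul_le (X Y : Matrix (o × m) (o × m) ℂ) :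
    bmatNorm (X * Y) ≤ bmatNorm X * bmatNorm Y := by
  simpa only [bmatNorm_eq_norm_blockOp, map_mul] using norm_mul_le _ _

lemma spectralRadius_le_bmatNorm (Y : Matrix (o × m) (o × m) ℂ) :
    spectralRadius ℂ Y ≤ ENNReal.ofReal (bmatNorm Y) := by
  simpa only [spectralRadius, AlgEquiv.spectrum_eq, bmatNorm_eq_norm_blockOp] using
    (blockOp Y).spectralRadius_le_norm

lemma bmatNorm_kronecker_one_le {C : Matrix o o ℂ} {c : ℝ} (hc0 : 0 ≤ c)
    (hc : ∀ k, ∑ l, ‖C k l‖ ≤ c) : bmatNorm (C ⊗ₖ (1 : Matrix m m ℂ)) ≤ c := by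
  rw [bmatNorm_eq_norm_blockOp]
  refine ContinuousLinearMap.opNorm_le_bound _ hc0 fun v => ?_
  obtain ⟨x, rfl⟩ := blockEquiv.surjective v
  rw [blockOp_blockEquiv]
  refine (pi_norm_le_iff_of_nonneg (by positivity)).2 fun k => ?_
  rw [blockEquiv_kronecker_one_mulVec]
  calc ‖∑ l, C k l • blockEquiv x l‖ ≤ ∑ l, ‖C k l‖ * ‖blockEquiv x‖ :=
        (norm_sum_le _ _).trans <| Finset.sum_le_sum fun l _ => by
          rw [norm_smul]; gcongr; exact norm_le_pi_norm _ l
    _ = (∑ l, ‖C k l‖) * ‖blockEquiv x‖ := (Finset.sum_mul ..).symm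
    _ ≤ c * ‖blockEquiv x‖ := by gcongr; exact hc k

lemma bmatNorm_stochastic_transpose_le_one (A : Matrix o o ℝ) (hA_nonneg : ∀ l k, 0 ≤ A l k)
    (hA_stoch : ∀ k, ∑ l, A l k = 1) :
    bmatNorm ((A.map (fun x => (x : ℂ)) ⊗ₖ (1 : Matrix m m ℂ))ᵀ) ≤ 1 := by
  rw [← kroneckerMap_transpose, transpose_one]
  refine bmatNorm_kronecker_one_le zero_le_one fun k => ?_
  simp [Complex.norm_real, abs_of_nonneg (hA_nonneg _ k), hA_stoch k]

theorem diffusion_mean_stability_bound_general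
    {N M : ℕ} (A : Matrix (Fin N) (Fin N) ℝ)
    (hA_nonneg : ∀ l k, 0 ≤ A l k)
    (hA_stoch : ∀ k, ∑ l, A l k = 1)
    (E : Matrix (Fin N) (Fin N) ℂ)
    (MM RR : Matrix (Fin N × Fin M) (Fin N × Fin M) ℂ)
    (B : Matrix (Fin N × Fin M) (Fin N × Fin M) ℂ)
    (hB : B = ((A.map (fun x => (x : ℂ)) ⊗ₖ (1 : Matrix (Fin M) (Fin M) ℂ))
        + E ⊗ₖ (1 : Matrix (Fin M) (Fin M) ℂ))ᵀ * (1 - MM * RR)) :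
    spectralRadius ℂ B ≤ ENNReal.ofReal
      ((1 + bmatNorm (E ⊗ₖ (1 : Matrix (Fin M) (Fin M) ℂ))ᵀ) * bmatNorm (1 - MM * RR)) := by
  have hA := bmatNorm_stochastic_transpose_le_one (m := Fin M) A hA_nonneg hA_stoch
  have hB_norm : bmatNorm B ≤
      (1 + bmatNorm (E ⊗ₖ (1 : Matrix (Fin M) (Fin M) ℂ))ᵀ) * bmatNorm (1 - MM * RR) := by
    rw [hB, transpose_add]
    refine (bmatNorm_mul_le _ _).trans ?_
    gcongr
    · exact bmatNorm_nonneg _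
    · exact (bmatNorm_add_le _ _).trans (by gcongr)
  exact (spectralRadius_le_bmatNorm B).trans (ENNReal.ofReal_le_ofReal hB_norm)

/-- Mean-stability bound for equalized diffusion LMS: with `A` left-stochastic with
nonnegative entries, `E` a channel-estimation-error matrix, `M` the (block-diagonal)
step-size matrix `diag{μ_k} ⊗ I_M` and `R` the block-diagonal covariance matrix, the
spectral radius of `B = ((A⊗I) + (E⊗I))ᵀ (I − M R)` satisfies
`ρ(B) ≤ (1 + ‖(E⊗I)ᵀ‖_{b,∞}) ‖I − M R‖_{b,∞}`. -/
theorem diffusion_mean_stability_bound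
    {N M : ℕ} (A : Matrix (Fin N) (Fin N) ℝ)
    (hA_nonneg : ∀ l k, 0 ≤ A l k)
    (hA_stoch : ∀ k, ∑ l, A l k = 1)
    (E : Matrix (Fin N) (Fin N) ℂ)
    (μ : Fin N → ℝ) (hμ : ∀ k, 0 < μ k)
    (Ru : Fin N → Matrix (Fin M) (Fin M) ℂ)
    (MM RR : Matrix (Fin N × Fin M) (Fin N × Fin M) ℂ)
    (hMM : MM = (Matrix.diagonal (fun k => ((μ k : ℝ) : ℂ))) ⊗ₖ (1 : Matrix (Fin M) (Fin M) ℂ))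
    (hRR : RR = ∑ k : Fin N, (Matrix.single k k (1 : ℂ)) ⊗ₖ Ru k)
    (B : Matrix (Fin N × Fin M) (Fin N × Fin M) ℂ)
    (hB : B = ((A.map (fun x => (x : ℂ)) ⊗ₖ (1 : Matrix (Fin M) (Fin M) ℂ))
        + E ⊗ₖ (1 : Matrix (Fin M) (Fin M) ℂ))ᵀ * (1 - MM * RR)) :
    spectralRadius ℂ B ≤ ENNReal.ofReal
      ((1 + bmatNorm (E ⊗ₖ (1 : Matrix (Fin M) (Fin M) ℂ))ᵀ) * bmatNorm (1 - MM * RR)) :=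
  diffusion_mean_stability_bound_general A hA_nonneg hA_stoch E MM RR B hB
end

section
/- Let F be a square matrix with spectral radius ρ(F) < 1, γ a vector, and suppose the sequence s_i satisfies s_i(σ) = s_{i−1}(Fσ) + γ^T σ for all weighting vectors σ, with s_i(σ) = E‖w̃_i‖²_σ. Then in steady state, lim_{i→∞} E‖w̃_i‖²_{(I−F)σ} = γ^T σ, and for any positive semidefinite weighting Ω, lim_{i→∞} E‖w̃_i‖²_Ω = γ^T (I−F)^{−1} vec(Ω). -/
open Matrix Filter
open scoped ComplexOrder

/-- Steady-state variance relation of diffusion LMS: if the weighted mean-square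
errors `s_i(σ) = E‖w̃_i‖²_σ` (linear in the weight vector `σ`) satisfy
`s_i(σ) = s_{i−1}(Fσ) + γᵀσ` with `ρ(F) < 1` and each `s_i(σ)` converges, then
`lim_i E‖w̃_i‖²_{(I−F)σ} = γᵀσ`, and for any positive semidefinite weighting `Ω`,
`lim_i E‖w̃_i‖²_Ω = γᵀ(I−F)⁻¹ vec(Ω)`. -/
theorem steady_state_variance_relation
    {m : ℕ} (F : Matrix (Fin m × Fin m) (Fin m × Fin m) ℂ)
    (hF : spectralRadius ℂ F < 1)
    (γ : Fin m × Fin m → ℂ)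
    (s : ℕ → ((Fin m × Fin m) → ℂ) →ₗ[ℂ] ℂ)
    (hrec : ∀ i σ, s (i + 1) σ = s i (F.mulVec σ) + γ ⬝ᵥ σ)
    (L : ((Fin m × Fin m) → ℂ) → ℂ)
    (hL : ∀ σ, Tendsto (fun i => s i σ) atTop (nhds (L σ))) :
    (∀ σ, Tendsto (fun i => s i (((1 : Matrix (Fin m × Fin m) (Fin m × Fin m) ℂ) - F).mulVec σ))
        atTop (nhds (γ ⬝ᵥ σ))) ∧
    (∀ Om : Matrix (Fin m) (Fin m) ℂ, Om.PosSemidef →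
      Tendsto (fun i => s i (fun p => Om p.1 p.2)) atTop
        (nhds (γ ⬝ᵥ (((1 : Matrix (Fin m × Fin m) (Fin m × Fin m) ℂ) - F)⁻¹.mulVec
          (fun p => Om p.1 p.2))))) := by
  -- The limit L satisfies L σ = L (F σ) + γ ⬝ σ.
  have hLrec : ∀ σ, L σ = L (F.mulVec σ) + γ ⬝ᵥ σ := by
    intro σ
    have h1 : Tendsto (fun i => s (i + 1) σ) atTop (nhds (L σ)) :=
      (hL σ).comp (tendsto_add_atTop_nat 1)
    have h2 : Tendsto (fun i => s i (F.mulVec σ) + γ ⬝ᵥ σ) atTop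
        (nhds (L (F.mulVec σ) + γ ⬝ᵥ σ)) := (hL (F.mulVec σ)).add tendsto_const_nhds
    have : (fun i => s (i + 1) σ) = fun i => s i (F.mulVec σ) + γ ⬝ᵥ σ := by
      funext i; exact hrec i σ
    rw [this] at h1
    exact tendsto_nhds_unique h1 h2
  have key : ∀ σ, Tendsto (fun i => s i
      (((1 : Matrix (Fin m × Fin m) (Fin m × Fin m) ℂ) - F).mulVec σ))
      atTop (nhds (γ ⬝ᵥ σ)) := by
    intro σ
    have hvec : ((1 : Matrix (Fin m × Fin m) (Fin m × Fin m) ℂ) - F).mulVec σ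
        = σ - F.mulVec σ := by
      rw [Matrix.sub_mulVec, Matrix.one_mulVec]
    have h1 : Tendsto (fun i => s i σ - s i (F.mulVec σ)) atTop
        (nhds (L σ - L (F.mulVec σ))) := (hL σ).sub (hL (F.mulVec σ))
    have heq : (fun i => s i (((1 : Matrix (Fin m × Fin m) (Fin m × Fin m) ℂ) - F).mulVec σ))
        = fun i => s i σ - s i (F.mulVec σ) := by
      funext i; rw [hvec, map_sub]
    have hval : L σ - L (F.mulVec σ) = γ ⬝ᵥ σ := by
      rw [hLrec σ]; ring
    rw [heq]
    exact hval ▸ h1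
  refine ⟨key, fun Om _ => ?_⟩
  -- (1 - F) is invertible since ρ(F) < 1.
  have hunit : IsUnit ((1 : Matrix (Fin m × Fin m) (Fin m × Fin m) ℂ) - F) := by
    by_contra h
    have hmem : (1 : ℂ) ∈ spectrum ℂ F := by
      rw [spectrum.mem_iff]
      simpa using h
    have hle : (1 : ENNReal) ≤ spectralRadius ℂ F := by
      have := le_iSup₂ (f := fun k (_ : k ∈ spectrum ℂ F) => (‖k‖₊ : ENNReal)) 1 hmem
      simpa [spectralRadius] using this
    exact absurd hF (not_lt.mpr hle)
  have hdet : IsUnit ((1 : Matrix (Fin m × Fin m) (Fin m × Fin m) ℂ) - F).det :=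
    (Matrix.isUnit_iff_isUnit_det _).mp hunit
  set A := (1 : Matrix (Fin m × Fin m) (Fin m × Fin m) ℂ) - F with hA
  have hmul : A.mulVec (A⁻¹.mulVec (fun p => Om p.1 p.2)) = fun p => Om p.1 p.2 := by
    rw [Matrix.mulVec_mulVec, Matrix.mul_nonsing_inv _ hdet, Matrix.one_mulVec]
  have := key (A⁻¹.mulVec (fun p => Om p.1 p.2))
  rw [hmul] at this
  exact this
end
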